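/- With g and G the quadratic and cubic forms on S⁴V built from the symplectic ε as above, the normalization identity 6·G^e_{a(b}·G_{cd)e} = g_{a(b}·g_{cd)} holds, where indices are raised with g and round brackets denote symmetrization over the enclosed indices. -/

import Mathlib

noncomputable section

open Matrix

/-- The spinor symplectic form `ε` on the 2-dimensional space `V = ℂ²`. -/
def eps : Matrix (Fin 2) (Fin 2) ℂ := !![0, 1; -1, 0]

/-- An index of `S⁴V` is a (symmetrized) block of four spinor indices. -/
abbrev Idx := Fin 4 → Fin 2

/-- The induced metric `g_{ae} = S_{(ABCD)}(ε_{AE}ε_{BF}ε_{CG}ε_{DH})` on `S⁴V`. -/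
def gS (a e : Idx) : ℂ :=
  (1 / 24) * ∑ σ : Equiv.Perm (Fin 4), ∏ i : Fin 4, eps (a (σ i)) (e i)

/-- The cubic form `G_{aep} = S_{(ABCD)}S_{(EFGH)}(ε_{AE}ε_{BF}ε_{GP}ε_{HQ}ε_{CR}ε_{DS})`
as a tensor on `S⁴V`. -/
def GS (a e p : Idx) : ℂ :=
  (1 / 24) ^ 3 * ∑ σ : Equiv.Perm (Fin 4), ∑ τ : Equiv.Perm (Fin 4),
    ∑ ω : Equiv.Perm (Fin 4),
    eps (a (σ 0)) (e (τ 0)) * eps (a (σ 1)) (e (τ 1)) *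
    eps (e (τ 2)) (p (ω 0)) * eps (e (τ 3)) (p (ω 1)) *
    eps (a (σ 2)) (p (ω 2)) * eps (a (σ 3)) (p (ω 3))

/-- A basis of the 5-dimensional space `S⁴V` indexed by `Fin 5`. -/
def tup (m : Fin 5) : Idx := fun i => if (i : ℕ) < (m : ℕ) then 1 else 0

/-- Components of `g` in the `Fin 5` basis of `S⁴V`. -/
def g5 : Matrix (Fin 5) (Fin 5) ℂ := fun m n => gS (tup m) (tup n)

/-- Components of `G` in the `Fin 5` basis of `S⁴V`. -/
def G5 (m n p : Fin 5) : ℂ := GS (tup m) (tup n) (tup p)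

/-- Symmetrization of a trilinear expression over its three displayed indices. -/
def sym3 (T : Fin 5 → Fin 5 → Fin 5 → ℂ) (b c d : Fin 5) : ℂ :=
  (T b c d + T b d c + T c b d + T c d b + T d b c + T d c b) / 6

/-!
`gS y e` is `1/24` times the permanent of the matrix `ε (y i) (e j)`, and by transposing the
permanent the innermost sum of `GS` is again such a permanent, so `G` is a double sum of pairings
against `g`. On the basis `tup`, `g` is anti-diagonal with entries `(-1)ⁿ / C(4, n)`, its inverse
has entries `(-1)ⁿ C(4, n)`, and `G` is supported on `m + n + p = 6`. After clearing denominators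
the identity is an identity between integers, checked by `decide`.
-/

def epsInt : Matrix (Fin 2) (Fin 2) ℤ := !![0, 1; -1, 0]

lemma eps_apply_eq_intCast (i j : Fin 2) : eps i j = epsInt i j := by
  fin_cases i <;> fin_cases j <;> simp [eps, epsInt]

def pairingMatrix {R : Type*} (ε : Matrix (Fin 2) (Fin 2) R) (y e : Idx) :
    Matrix (Fin 4) (Fin 4) R :=
  of fun i j => ε (y i) (e j)

lemma gS_eq_permanent (y e : Idx) : gS y e = (1 / 24) * (pairingMatrix eps y e).permanent := rfl

/-- `24 • g` on basis tensors with `k` and `n` indices equal to `1`. -/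
def metricInt (k n : ℕ) : ℤ :=
  if k + n = 4 then (-1) ^ n * (n.factorial * (4 - n).factorial : ℕ) else 0

lemma permanent_pairingMatrix_epsInt_tup : ∀ (y : Idx) (n : Fin 5),
    (pairingMatrix epsInt y (tup n)).permanent = metricInt (∑ i, (y i : ℕ)) n := by
  decide +kernel

lemma gS_tup (y : Idx) (n : Fin 5) : gS y (tup n) = metricInt (∑ i, (y i : ℕ)) n / 24 := by
  rw [gS_eq_permanent, ← permanent_pairingMatrix_epsInt_tup]
  simp only [permanent, pairingMatrix, of_apply, eps_apply_eq_intCast]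
  push_cast
  ring

lemma sum_tup (m : Fin 5) : ∑ i, (tup m i : ℕ) = m := by
  revert m; decide

lemma g5_apply (m n : Fin 5) : g5 m n = metricInt m n / 24 := by
  rw [g5, gS_tup, sum_tup]

def metricInvInt (e f : Fin 5) : ℤ :=
  if (e : ℕ) + f = 4 then (-1) ^ (e : ℕ) * (Nat.choose 4 e : ℤ) else 0

lemma sum_metricInt_mul_metricInvInt : ∀ i j : Fin 5,
    ∑ k : Fin 5, metricInt i k * metricInvInt k j = if i = j then 24 else 0 := by
  decide

lemma inv_g5 : g5⁻¹ = of fun e f => (metricInvInt e f : ℂ) := by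
  refine inv_eq_right_inv (ext fun i j => ?_)
  have h := congrArg (fun z : ℤ => (z : ℂ) / 24) (sum_metricInt_mul_metricInvInt i j)
  simp only [mul_apply, g5_apply, of_apply, one_apply]
  split_ifs at h ⊢ <;> push_cast at h <;> simpa [Finset.sum_div, div_mul_eq_mul_div] using h

lemma permanent_pairingMatrix_eq_sum_perm {R : Type*} [CommSemiring R]
    (ε : Matrix (Fin 2) (Fin 2) R) (y e : Idx) :
    (pairingMatrix ε y e).permanent = ∑ ω : Equiv.Perm (Fin 4), ∏ i, ε (y i) (e (ω i)) := by
  rw [← permanent_transpose]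
  rfl

lemma GS_eq_sum_mul_gS (a e p : Idx) :
    GS a e p = (1 / 24) ^ 2 * ∑ σ : Equiv.Perm (Fin 4), ∑ τ : Equiv.Perm (Fin 4),
      eps (a (σ 0)) (e (τ 0)) * eps (a (σ 1)) (e (τ 1)) *
        gS ![e (τ 2), e (τ 3), a (σ 2), a (σ 3)] p := by
  simp only [GS, gS_eq_permanent, permanent_pairingMatrix_eq_sum_perm, Fin.prod_univ_four,
    Finset.mul_sum]
  refine Finset.sum_congr rfl fun σ _ => Finset.sum_congr rfl fun τ _ =>
    Finset.sum_congr rfl fun ω _ => ?_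
  simp only [cons_val]
  ring

/-- `144 • G` at `(m, n, 6 - m - n)`. -/
def cubicTable : Matrix (Fin 5) (Fin 5) ℤ :=
  !![  0,   0,  24, -18,  24;
       0, -18,   3,   3, -18;
      24,   3,  -4,   3,  24;
     -18,   3,   3, -18,   0;
      24, -18,  24,   0,   0]

def cubicInt (m n p : Fin 5) : ℤ := if (m : ℕ) + n + p = 6 then cubicTable m n else 0

lemma sum_sum_epsInt_mul_metricInt : ∀ m n p : Fin 5,
    ∑ σ : Equiv.Perm (Fin 4), ∑ τ : Equiv.Perm (Fin 4),
      epsInt (tup m (σ 0)) (tup n (τ 0)) * epsInt (tup m (σ 1)) (tup n (τ 1)) *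
        metricInt (tup n (τ 2) + tup n (τ 3) + tup m (σ 2) + tup m (σ 3) : ℕ) p
      = 96 * cubicInt m n p := by
  decide +kernel

lemma G5_apply (m n p : Fin 5) : G5 m n p = cubicInt m n p / 144 := by
  have h := congrArg (fun z : ℤ => (z : ℂ) / 24 ^ 3) (sum_sum_epsInt_mul_metricInt m n p)
  simp only [G5, GS_eq_sum_mul_gS, gS_tup, Fin.sum_univ_four, eps_apply_eq_intCast]
  push_cast at h ⊢
  rw [show (cubicInt m n p : ℂ) / 144 = 96 * cubicInt m n p / 24 ^ 3 by ring, ← h]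
  simp only [Finset.mul_sum, Finset.sum_div]
  exact Finset.sum_congr rfl fun σ _ => Finset.sum_congr rfl fun τ _ => by ring

def sym3Sum {R : Type*} [AddCommMonoid R] (T : Fin 5 → Fin 5 → Fin 5 → R) (b c d : Fin 5) :
    R :=
  T b c d + T b d c + T c b d + T c d b + T d b c + T d c b

lemma sym3_intCast_div (T : Fin 5 → Fin 5 → Fin 5 → ℤ) (k : ℂ) (b c d : Fin 5) :
    sym3 (fun b c d => (T b c d : ℂ) / k) b c d = ((sym3Sum T b c d : ℤ) : ℂ) / (6 * k) := by
  simp only [sym3, sym3Sum]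
  push_cast
  ring

lemma sym3Sum_cubicInt_contraction : ∀ a b c d : Fin 5,
    sym3Sum (fun b c d => ∑ e : Fin 5, ∑ f : Fin 5,
        metricInvInt e f * cubicInt f a b * cubicInt c d e) b c d
      = 6 * sym3Sum (fun b c d => metricInt a b * metricInt c d) b c d := by
  decide +kernel

/-- The normalization identity `6·G^e_{a(b}·G_{cd)e} = g_{a(b}·g_{cd)}`
(indices raised with `g`, round brackets denoting symmetrization over `b,c,d`). -/
theorem normalization_identity :
    ∀ a b c d : Fin 5,
      6 * sym3 (fun b c d => ∑ e : Fin 5, ∑ f : Fin 5,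
        (g5⁻¹) e f * G5 f a b * G5 c d e) b c d
      = sym3 (fun b c d => g5 a b * g5 c d) b c d := by
  intro a b c d
  have hG : (fun b c d => ∑ e : Fin 5, ∑ f : Fin 5, (g5⁻¹) e f * G5 f a b * G5 c d e)
      = fun b c d : Fin 5 => ((∑ e : Fin 5, ∑ f : Fin 5,
          metricInvInt e f * cubicInt f a b * cubicInt c d e : ℤ) : ℂ) / 144 ^ 2 := by
    funext b c d
    simp only [inv_g5, of_apply, G5_apply]
    push_cast
    simp only [Finset.sum_div]
    exact Finset.sum_congr rfl fun e _ => Finset.sum_congr rfl fun f _ => by ring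
  have hg : (fun b c d => g5 a b * g5 c d)
      = fun b c d : Fin 5 => ((metricInt a b * metricInt c d : ℤ) : ℂ) / 24 ^ 2 := by
    funext b c d
    simp only [g5_apply]
    push_cast
    ring
  rw [hG, hg, sym3_intCast_div, sym3_intCast_div, sym3Sum_cubicInt_contraction]
  push_cast
  ring
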